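/- In the CDC coded multicast within a set K of m+1 nodes where for each size-m subset P ⊂ K a packet V_P is split into m segments indexed by P, each node k ∈ K can recover V_{K\{k}} from the multicast messages: for each k' ≠ k, the XOR message X_{k'} = ⊕_{P ∋ k', |P|=m} V_{P,k'} reveals the segment V_{K\{k},k'} to node k, since node k knows all other summands V_{P,k'} with k ∈ P. -/
import Mathlib


/-- CDC decoding: in a set `𝒦` of `m+1` nodes, with a segment `V P` for each
`m`-subset `P` of `𝒦`, every `m`-subset `P ≠ 𝒦 \ {k}` containing `k'` also
contains `k`; hence node `k` recovers the segment `V (𝒦 \ {k})` from the XOR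
message `X k' = ⊕_{P ∋ k'} V P` by cancelling the locally known summands. -/
theorem stmt_8 {ι G : Type*} [DecidableEq ι] [AddCommGroup G]
    (hchar2 : ∀ x : G, x + x = 0)
    (𝒦 : Finset ι) (m : ℕ) (hcard : 𝒦.card = m + 1)
    (k k' : ι) (hk : k ∈ 𝒦) (hk' : k' ∈ 𝒦) (hne : k ≠ k')
    (V : Finset ι → G) :
    ((∀ P ∈ 𝒦.powersetCard m, k' ∈ P → P ≠ 𝒦.erase k → k ∈ P) ∧
      V (𝒦.erase k) =
        (∑ P ∈ (𝒦.powersetCard m).filter (fun P => k' ∈ P), V P) +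
          ∑ P ∈ (𝒦.powersetCard m).filter (fun P => k' ∈ P ∧ P ≠ 𝒦.erase k), V P) := by
  have hmem : 𝒦.erase k ∈ (𝒦.powersetCard m).filter (fun P => k' ∈ P) := by
    simp [Finset.mem_powersetCard, Finset.erase_subset, Finset.card_erase_of_mem hk, hcard,
      Finset.mem_erase, Ne.symm hne, hk']
  refine ⟨?_, ?_⟩
  · intro P hP hk'P hPne
    rw [Finset.mem_powersetCard] at hP
    by_contra hkP
    apply hPne
    have hsub : P ⊆ 𝒦.erase k := fun x hx =>
      Finset.mem_erase.2 ⟨fun h => hkP (h ▸ hx), hP.1 hx⟩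
    exact Finset.eq_of_subset_of_card_le hsub
      (by rw [Finset.card_erase_of_mem hk, hcard, hP.2]; omega)
  · have hfe : (𝒦.powersetCard m).filter (fun P => k' ∈ P ∧ P ≠ 𝒦.erase k)
        = ((𝒦.powersetCard m).filter (fun P => k' ∈ P)).erase (𝒦.erase k) := by
      ext P
      simp only [Finset.mem_erase, Finset.mem_filter, Finset.mem_powersetCard]; tauto
    rw [hfe, ← Finset.add_sum_erase _ _ hmem, add_assoc, hchar2, add_zero]
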